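/- Let (X,d) and (Y,ρ) be metric spaces, a ∈ X, b ∈ Y, and f: X → Y with f(a) = b. If for every normalizing sequence r̃ and every maximal self-stable family X̃_{a,r̃} ⊆ X̃ there exist a normalizing sequence t̃ and a maximal self-stable family Ỹ_{b,t̃} ⊆ Ỹ such that f is differentiable w.r.t. the pair (X̃_{a,r̃}, Ỹ_{b,t̃}), then f is continuous at a. -/

import Mathlib

open Filter Topology

/-- A normalizing sequence: positive reals tending to 0. -/
def Normalizing (r : ℕ → ℝ) : Prop :=
  (∀ n, 0 < r n) ∧ Tendsto r atTop (nhds 0)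

/-- Two sequences in `X` are mutually stable w.r.t. `r`:
the limit of `dist (x n) (y n) / r n` exists and is finite. -/
def MutuallyStable {X : Type*} [MetricSpace X] (r : ℕ → ℝ) (x y : ℕ → X) : Prop :=
  ∃ L : ℝ, Tendsto (fun n => dist (x n) (y n) / r n) atTop (nhds L)

/-- The normalized limit distance `d̃`. -/
noncomputable def dtilde {X : Type*} [MetricSpace X] (r : ℕ → ℝ) (x y : ℕ → X) : ℝ :=
  limUnder atTop (fun n => dist (x n) (y n) / r n)

/-- A family is self-stable if every two members are mutually stable. -/
def SelfStable {X : Type*} [MetricSpace X] (r : ℕ → ℝ) (F : Set (ℕ → X)) : Prop :=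
  ∀ x ∈ F, ∀ y ∈ F, MutuallyStable r x y

/-- A family is maximal self-stable if it is self-stable and maximal with that property. -/
def MaximalSelfStable {X : Type*} [MetricSpace X] (r : ℕ → ℝ) (F : Set (ℕ → X)) : Prop :=
  SelfStable r F ∧ ∀ G, SelfStable r G → F ⊆ G → G = F

/-! Given `u n → a`, choose a normalizing `r` tending to `0` more slowly than `dist (u n) a`, so
that `u` and the constant sequence at `a` are mutually stable, and extend the pair to a maximal
self-stable family. The hypothesis maps this family into a self-stable family containing the
constant sequence at `b` for some normalizing `t`; hence `dist (f (u n)) b / t n` has a finite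
limit, and `t n → 0` forces `dist (f (u n)) b → 0`. -/

theorem tendsto_zero_of_tendsto_div {ι : Type*} {l : Filter ι} {g t : ι → ℝ} {L : ℝ}
    (ht : Tendsto t l (𝓝 0)) (ht0 : ∀ i, t i ≠ 0) (h : Tendsto (fun i => g i / t i) l (𝓝 L)) :
    Tendsto g l (𝓝 0) := by
  have hmul := h.mul ht
  rw [mul_zero] at hmul
  simpa only [div_mul_cancel₀ _ (ht0 _)] using hmul

theorem exists_normalizing_tendsto_div_zero {d : ℕ → ℝ} (hd0 : ∀ n, 0 ≤ d n)
    (hd : Tendsto d atTop (𝓝 0)) :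
    ∃ r, Normalizing r ∧ Tendsto (fun n => d n / r n) atTop (𝓝 0) := by
  -- `r = √s` with `d ≤ s` gives `d / r ≤ s / √s = √s`; the `(1/2)^n` keeps `s` positive.
  set s : ℕ → ℝ := fun n => d n + (1 / 2 : ℝ) ^ n
  have hs_pos : ∀ n, 0 < s n := fun n => add_pos_of_nonneg_of_pos (hd0 n) (by positivity)
  have hs : Tendsto s atTop (𝓝 0) := by
    simpa only [add_zero] using
      hd.add (tendsto_pow_atTop_nhds_zero_of_lt_one (by norm_num) (by norm_num))
  have hsqrt : Tendsto (fun n => √(s n)) atTop (𝓝 0) := by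
    simpa only [Real.sqrt_zero] using hs.sqrt
  refine ⟨fun n => √(s n), ⟨fun n => Real.sqrt_pos.mpr (hs_pos n), hsqrt⟩, ?_⟩
  refine squeeze_zero (fun n => div_nonneg (hd0 n) (Real.sqrt_nonneg _)) (fun n => ?_) hsqrt
  calc d n / √(s n) ≤ s n / √(s n) :=
        div_le_div_of_nonneg_right (le_add_of_nonneg_right (by positivity)) (Real.sqrt_nonneg _)
    _ = √(s n) := Real.div_sqrt

section Stability

variable {X : Type*} [MetricSpace X] {r : ℕ → ℝ}

theorem mutuallyStable_self (x : ℕ → X) : MutuallyStable r x x :=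
  ⟨0, by simpa only [dist_self, zero_div] using tendsto_const_nhds⟩

theorem MutuallyStable.symm {x y : ℕ → X} (h : MutuallyStable r x y) : MutuallyStable r y x := by
  obtain ⟨L, hL⟩ := h
  exact ⟨L, by simpa only [dist_comm] using hL⟩

theorem MutuallyStable.tendsto_dist_zero (hr : Normalizing r) {x y : ℕ → X}
    (h : MutuallyStable r x y) : Tendsto (fun n => dist (x n) (y n)) atTop (𝓝 0) := by
  obtain ⟨L, hL⟩ := h
  exact tendsto_zero_of_tendsto_div hr.2 (fun n => (hr.1 n).ne') hL

theorem selfStable_pair {x y : ℕ → X} (h : MutuallyStable r x y) : SelfStable r {x, y} := by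
  rintro x' (rfl | rfl) y' (rfl | rfl)
  exacts [mutuallyStable_self _, h, h.symm, mutuallyStable_self _]

theorem SelfStable.exists_maximalSelfStable_superset {F₀ : Set (ℕ → X)} (h₀ : SelfStable r F₀) :
    ∃ F, F₀ ⊆ F ∧ MaximalSelfStable r F := by
  obtain ⟨F, hF₀F, hF, hmax⟩ := zorn_subset_nonempty {F | SelfStable r F}
    (fun c hc hchain _ => by
      refine ⟨⋃₀ c, ?_, fun s hs => Set.subset_sUnion_of_mem hs⟩
      rintro x ⟨s, hs, hxs⟩ y ⟨s', hs', hys'⟩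
      rcases hchain.total hs hs' with hss' | hs's
      · exact hc hs' x (hss' hxs) y hys'
      · exact hc hs x hxs y (hs's hys')) F₀ h₀
  exact ⟨F, hF₀F, hF, fun G hG hFG => (hmax hG hFG).antisymm hFG⟩

theorem exists_maximalSelfStable_of_tendsto {u : ℕ → X} {a : X} (hu : Tendsto u atTop (𝓝 a)) :
    ∃ r, Normalizing r ∧ ∃ F, MaximalSelfStable r F ∧ u ∈ F ∧ (fun _ => a) ∈ F := by
  obtain ⟨r, hr, hratio⟩ :=
    exists_normalizing_tendsto_div_zero (fun n => dist_nonneg) (tendsto_iff_dist_tendsto_zero.mp hu)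
  obtain ⟨F, hsub, hF⟩ := (selfStable_pair (r := r) (x := u) (y := fun _ => a) ⟨0, hratio⟩)
    |>.exists_maximalSelfStable_superset
  exact ⟨r, hr, F, hF, hsub (by simp), hsub (by simp)⟩

end Stability

/-- If `f` is differentiable w.r.t. some pair of maximal self-stable families for every
normalizing sequence and every maximal self-stable family at `a`, then `f` is continuous at `a`. -/
theorem stmt_13 {X Y : Type*} [MetricSpace X] [MetricSpace Y]
    (a : X) (b : Y) (f : X → Y) (hfa : f a = b)
    (h : ∀ r : ℕ → ℝ, Normalizing r → ∀ F : Set (ℕ → X),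
      MaximalSelfStable r F → (fun _ => a) ∈ F →
        ∃ t : ℕ → ℝ, Normalizing t ∧ ∃ G : Set (ℕ → Y),
          MaximalSelfStable t G ∧ (fun _ => b) ∈ G ∧
          (∀ x ∈ F, (fun n => f (x n)) ∈ G) ∧
          (∀ x ∈ F, ∀ y ∈ F, dtilde r x y = 0 →
            dtilde t (fun n => f (x n)) (fun n => f (y n)) = 0)) :
    ContinuousAt f a := by
  refine tendsto_nhds_iff_seq_tendsto.mpr fun u hu => ?_
  obtain ⟨r, hr, F, hF, huF, haF⟩ := exists_maximalSelfStable_of_tendsto hu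
  obtain ⟨t, ht, G, hG, hbG, hfG, -⟩ := h r hr F hF haF
  have hdist := (hG.1 _ (hfG u huF) _ hbG).tendsto_dist_zero ht
  rw [← hfa] at hdist
  exact tendsto_iff_dist_tendsto_zero.mpr hdist
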